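/- arXiv:math/9205203 — 4 statements merged into one kernel-verified Lean document; each statement's English description precedes it below -/
import Mathlib

section
/- Let 1 < p < ∞, let q = p/(p−1), let X be a real Banach space, let (X_k)_{k≥1} be finite-dimensional linear subspaces of X, and let (r_k)_{k≥1} be positive real numbers with ∑_{k=1}^∞ r_k^q < ∞. Define V = { ∑_{k=1}^∞ α_k x_k : x_k ∈ X_k with ‖x_k‖ ≤ r_k for each k, and ∑_{k=1}^∞ |α_k|^p ≤ 1 } (each such series converges absolutely in X by Hölder's inequality). Then V is a compact, convex, symmetric (i.e., −V = V) subset of X. -/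
open Finset Filter Topology

/-- Let `1 < p < ∞`, `q = p/(p-1)`, let `(Xs k)` be finite-dimensional subspaces of a real
Banach space `X` and let `r` be positive reals with `∑ (r k) ^ q < ∞`.  Then the set
`V = { ∑ α k • x k : x k ∈ Xs k, ‖x k‖ ≤ r k, ∑ |α k| ^ p ≤ 1 }` is compact, convex and
symmetric. -/
theorem stmt_7 (X : Type*) [NormedAddCommGroup X] [NormedSpace ℝ X] [CompleteSpace X]
    (p q : ℝ) (hp : 1 < p) (hq : q = p / (p - 1))
    (Xs : ℕ → Submodule ℝ X) (hfin : ∀ k, FiniteDimensional ℝ (Xs k))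
    (r : ℕ → ℝ) (hr : ∀ k, 0 < r k) (hrq : Summable fun k => r k ^ q)
    (V : Set X)
    (hV : V = {v : X | ∃ (α : ℕ → ℝ) (x : ℕ → X),
      (∀ k, x k ∈ Xs k ∧ ‖x k‖ ≤ r k) ∧
      (Summable fun k => |α k| ^ p) ∧ (∑' k, |α k| ^ p) ≤ 1 ∧
      HasSum (fun k => α k • x k) v}) :
    IsCompact V ∧ Convex ℝ V ∧ -V = V := by
  have hpq : p.HolderConjugate q := (Real.holderConjugate_iff_eq_conjExponent hp).2 hq
  have hp0 : 0 < p := hpq.pos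
  have hq0 : 0 < q := hpq.symm.pos
  have hpne : p ≠ 0 := hp0.ne'
  -- the key convexity inequality
  have key : ∀ t s a b : ℝ, 0 ≤ t → 0 ≤ s → t + s = 1 → 0 ≤ a → 0 ≤ b →
      t * a + s * b ≤ (t * a ^ p + s * b ^ p) ^ p⁻¹ := by
    intro t s a b ht hs hts ha hb
    have h1 : (t * a + s * b) ^ p ≤ t * a ^ p + s * b ^ p := by
      have := (convexOn_rpow hp.le).2 (Set.mem_Ici.2 ha) (Set.mem_Ici.2 hb) ht hs hts
      simpa [smul_eq_mul] using this
    calc t * a + s * b = ((t * a + s * b) ^ p) ^ p⁻¹ :=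
          (Real.rpow_rpow_inv (by positivity) hpne).symm
      _ ≤ (t * a ^ p + s * b ^ p) ^ p⁻¹ :=
          Real.rpow_le_rpow (by positivity) h1 (by positivity)
  subst hV
  refine ⟨?_, ?_, ?_⟩
  · -- Compactness
    classical
    set K : Set ((ℕ → ℝ) × (ℕ → X)) :=
      {ax | (∀ n, ∑ k ∈ Finset.range n, |ax.1 k| ^ p ≤ 1) ∧
        ∀ k, ax.2 k ∈ Xs k ∧ ‖ax.2 k‖ ≤ r k} with hK
    have hmem_sum : ∀ ax ∈ K, Summable (fun k => |ax.1 k| ^ p) ∧ (∑' k, |ax.1 k| ^ p) ≤ 1 := by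
      rintro ⟨α, x⟩ ⟨h1, h2⟩
      exact ⟨summable_of_sum_range_le (fun k => by positivity) h1,
        Real.tsum_le_of_sum_range_le (fun k => by positivity) h1⟩
    have hmem_norm : ∀ ax ∈ K, Summable fun k => ‖ax.1 k • ax.2 k‖ := by
      rintro ⟨α, x⟩ hax
      obtain ⟨hαs, -⟩ := hmem_sum _ hax
      obtain ⟨h1, h2⟩ := hax
      refine Summable.of_nonneg_of_le (fun k => norm_nonneg _) (fun k => ?_)
        ((hαs.div_const p).add (hrq.div_const q))
      calc ‖α k • x k‖ = |α k| * ‖x k‖ := by rw [norm_smul, Real.norm_eq_abs]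
        _ ≤ |α k| * r k := mul_le_mul_of_nonneg_left (h2 k).2 (abs_nonneg _)
        _ ≤ |α k| ^ p / p + r k ^ q / q :=
            Real.young_inequality_of_nonneg (abs_nonneg _) (hr k).le hpq
    have himg : (fun ax : (ℕ → ℝ) × (ℕ → X) => ∑' k, ax.1 k • ax.2 k) '' K
        = {v : X | ∃ (α : ℕ → ℝ) (x : ℕ → X),
          (∀ k, x k ∈ Xs k ∧ ‖x k‖ ≤ r k) ∧
          (Summable fun k => |α k| ^ p) ∧ (∑' k, |α k| ^ p) ≤ 1 ∧
          HasSum (fun k => α k • x k) v} := by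
      ext v
      constructor
      · rintro ⟨⟨α, x⟩, hax, rfl⟩
        obtain ⟨hαs, hαt⟩ := hmem_sum _ hax
        exact ⟨α, x, hax.2, hαs, hαt, ((hmem_norm _ hax).of_norm).hasSum⟩
      · rintro ⟨α, x, hx, hαs, hαt, hsum⟩
        refine ⟨(α, x), ⟨fun n => ?_, hx⟩, hsum.tsum_eq⟩
        exact (Summable.sum_le_tsum (range n) (fun k _ => by positivity) hαs).trans hαt
    have hKclosed : IsClosed K := by
      rw [hK, Set.setOf_and]
      refine IsClosed.inter ?_ ?_
      · rw [Set.setOf_forall]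
        refine isClosed_iInter fun n => isClosed_le ?_ continuous_const
        exact continuous_finset_sum _ fun k _ =>
          ((continuous_apply k).comp continuous_fst).abs.rpow_const fun ax => Or.inr hp0.le
      · rw [Set.setOf_forall]
        refine isClosed_iInter fun k => ?_
        have hc : Continuous fun ax : (ℕ → ℝ) × (ℕ → X) => ax.2 k :=
          (continuous_apply k).comp continuous_snd
        have hXc : IsClosed (Xs k : Set X) := by
          haveI := hfin k
          exact Submodule.closed_of_finiteDimensional (Xs k)
        rw [Set.setOf_and]
        exact (hXc.preimage hc).inter (isClosed_le hc.norm continuous_const)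
    have hC : IsCompact ((Set.univ.pi fun _ : ℕ => Set.Icc (-1:ℝ) 1) ×ˢ
        (Set.univ.pi fun k => Subtype.val '' Metric.closedBall (0 : Xs k) (r k))) := by
      refine (isCompact_univ_pi fun _ => isCompact_Icc).prod (isCompact_univ_pi fun k => ?_)
      haveI := hfin k
      exact (isCompact_closedBall _ _).image continuous_subtype_val
    have hKcomp : IsCompact K := by
      refine hC.of_isClosed_subset hKclosed ?_
      rintro ⟨α, x⟩ ⟨h1, h2⟩
      refine Set.mem_prod.2 ⟨Set.mem_univ_pi.2 fun k => ?_, Set.mem_univ_pi.2 fun k => ?_⟩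
      · have hk : |α k| ^ p ≤ 1 :=
          le_trans (Finset.single_le_sum (f := fun i => |α i| ^ p)
            (fun i _ => by positivity) (self_mem_range_succ k)) (h1 (k+1))
        have habs : |α k| ≤ 1 := by
          have h := Real.rpow_le_rpow (by positivity) hk (inv_nonneg.2 hp0.le)
          rwa [Real.rpow_rpow_inv (abs_nonneg _) hpne, Real.one_rpow] at h
        exact abs_le.1 habs
      · exact ⟨⟨x k, (h2 k).1⟩, by
          simpa [Metric.mem_closedBall, dist_zero_right] using (h2 k).2, rfl⟩
    have hcont : ContinuousOn (fun ax : (ℕ → ℝ) × (ℕ → X) => ∑' k, ax.1 k • ax.2 k) K := by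
      have hFcont : ∀ n : ℕ, Continuous fun ax : (ℕ → ℝ) × (ℕ → X) =>
          ∑ k ∈ range n, ax.1 k • ax.2 k := fun n =>
        continuous_finset_sum _ fun k _ =>
          ((continuous_apply k).comp continuous_fst).smul ((continuous_apply k).comp continuous_snd)
      suffices huni : TendstoUniformlyOn
          (fun (n : ℕ) (ax : (ℕ → ℝ) × (ℕ → X)) => ∑ k ∈ range n, ax.1 k • ax.2 k)
          (fun ax : (ℕ → ℝ) × (ℕ → X) => ∑' k, ax.1 k • ax.2 k) atTop K by
        exact huni.continuousOn (Filter.Frequently.of_forall fun n => (hFcont n).continuousOn)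
      rw [Metric.tendstoUniformlyOn_iff]
      intro ε hε
      set δ : ℝ := (p * (ε / 2)) ^ p⁻¹ with hδdef
      have hδpos : 0 < δ := Real.rpow_pos_of_pos (by positivity) _
      have hδp : δ ^ p = p * (ε / 2) := Real.rpow_inv_rpow (by positivity) hpne
      have hA : 0 < δ⁻¹ ^ q / q := by positivity
      set T : ℕ → ℝ := fun n => ∑' k : ↑((Finset.range n : Finset ℕ) : Set ℕ)ᶜ, r k ^ q with hT
      have hTeq : ∀ n, T n = (∑' k, r k ^ q) - ∑ k ∈ range n, r k ^ q := by
        intro n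
        have h := Summable.sum_add_tsum_compl (s := range n) hrq
        rw [hT]
        linarith
      have htail : Tendsto T atTop (𝓝 0) := by
        have h : Tendsto (fun n => (∑' k, r k ^ q) - ∑ k ∈ range n, r k ^ q) atTop
            (𝓝 ((∑' k, r k ^ q) - ∑' k, r k ^ q)) :=
          tendsto_const_nhds.sub hrq.hasSum.tendsto_sum_nat
        rw [sub_self] at h
        exact h.congr fun n => (hTeq n).symm
      have hev : ∀ᶠ n in atTop, T n < (ε / 2) / (δ⁻¹ ^ q / q) :=
        htail.eventually (gt_mem_nhds (by positivity))
      filter_upwards [hev] with n hn ax hax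
      obtain ⟨hαs, hαt⟩ := hmem_sum _ hax
      have hnorms : Summable fun k => ‖ax.1 k • ax.2 k‖ := hmem_norm _ hax
      have hsummable : Summable fun k => ax.1 k • ax.2 k := hnorms.of_norm
      rw [dist_eq_norm]
      have hsplit := Summable.sum_add_tsum_compl (s := range n) hsummable
      have hdiff : (∑' k, ax.1 k • ax.2 k) - ∑ k ∈ range n, ax.1 k • ax.2 k
          = ∑' k : ↑((Finset.range n : Finset ℕ) : Set ℕ)ᶜ, ax.1 k • ax.2 k := by
        rw [← hsplit]; abel
      rw [hdiff]
      have hgsum : Summable fun k => δ ^ p / p * |ax.1 k| ^ p + δ⁻¹ ^ q / q * r k ^ q :=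
        (hαs.mul_left _).add (hrq.mul_left _)
      have hpoint : ∀ k : ↑((Finset.range n : Finset ℕ) : Set ℕ)ᶜ,
          ‖ax.1 (k : ℕ) • ax.2 (k : ℕ)‖ ≤
            δ ^ p / p * |ax.1 (k : ℕ)| ^ p + δ⁻¹ ^ q / q * r (k : ℕ) ^ q := by
        rintro ⟨k, -⟩
        calc ‖ax.1 k • ax.2 k‖ = |ax.1 k| * ‖ax.2 k‖ := by rw [norm_smul, Real.norm_eq_abs]
          _ ≤ |ax.1 k| * r k := mul_le_mul_of_nonneg_left (hax.2 k).2 (abs_nonneg _)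
          _ = (δ * |ax.1 k|) * (δ⁻¹ * r k) := by
              field_simp
          _ ≤ (δ * |ax.1 k|) ^ p / p + (δ⁻¹ * r k) ^ q / q :=
              Real.young_inequality_of_nonneg (mul_nonneg hδpos.le (abs_nonneg _))
                (mul_nonneg (inv_nonneg.2 hδpos.le) (hr k).le) hpq
          _ = δ ^ p / p * |ax.1 k| ^ p + δ⁻¹ ^ q / q * r k ^ q := by
              rw [Real.mul_rpow hδpos.le (abs_nonneg _),
                Real.mul_rpow (inv_nonneg.2 hδpos.le) (hr k).le]
              ring
      calc ‖∑' k : ↑((Finset.range n : Finset ℕ) : Set ℕ)ᶜ, ax.1 k • ax.2 k‖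
          ≤ ∑' k : ↑((Finset.range n : Finset ℕ) : Set ℕ)ᶜ, ‖ax.1 k • ax.2 k‖ :=
            norm_tsum_le_tsum_norm (hnorms.subtype _)
        _ ≤ ∑' k : ↑((Finset.range n : Finset ℕ) : Set ℕ)ᶜ,
              (δ ^ p / p * |ax.1 k| ^ p + δ⁻¹ ^ q / q * r k ^ q) :=
            Summable.tsum_le_tsum hpoint (hnorms.subtype _) (hgsum.subtype _)
        _ = δ ^ p / p * (∑' k : ↑((Finset.range n : Finset ℕ) : Set ℕ)ᶜ, |ax.1 k| ^ p)
              + δ⁻¹ ^ q / q * T n := by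
            have hs1 : Summable (fun k : ↑((Finset.range n : Finset ℕ) : Set ℕ)ᶜ =>
                δ ^ p / p * |ax.1 (k : ℕ)| ^ p) := (hαs.subtype _).mul_left _
            have hs2 : Summable (fun k : ↑((Finset.range n : Finset ℕ) : Set ℕ)ᶜ =>
                δ⁻¹ ^ q / q * r (k : ℕ) ^ q) := (hrq.subtype _).mul_left _
            rw [Summable.tsum_add hs1 hs2, tsum_mul_left, tsum_mul_left]
        _ ≤ δ ^ p / p * 1 + δ⁻¹ ^ q / q * T n := by
            refine add_le_add (mul_le_mul_of_nonneg_left ?_ (by positivity)) le_rfl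
            exact (Summable.tsum_subtype_le (fun k => |ax.1 k| ^ p) _
              (fun k => by positivity) hαs).trans hαt
        _ < ε / 2 + ε / 2 := by
            have h1 : δ ^ p / p * 1 = ε / 2 := by
              rw [hδp, mul_one]
              field_simp
            have h2 : δ⁻¹ ^ q / q * T n < ε / 2 := by
              have := (lt_div_iff₀ hA).1 hn
              linarith [this]
            linarith
        _ = ε := by ring
    rw [← himg]
    exact hKcomp.image_of_continuousOn hcont
  · -- Convexity
    rintro v ⟨α, x, hx, hαs, hαt, hvsum⟩ w ⟨β, y, hy, hβs, hβt, hwsum⟩ t s ht hs hts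
    set u : ℕ → ℝ := fun k => t * |α k| ^ p + s * |β k| ^ p with hu
    have hu0 : ∀ k, 0 ≤ u k := fun k => by positivity
    set γ : ℕ → ℝ := fun k => u k ^ p⁻¹ with hγ
    have hγ0 : ∀ k, 0 ≤ γ k := fun k => Real.rpow_nonneg (hu0 k) _
    have hγp : ∀ k, |γ k| ^ p = u k := fun k => by
      rw [abs_of_nonneg (hγ0 k)]; exact Real.rpow_inv_rpow (hu0 k) hpne
    set wt : ℕ → X := fun k => (t * α k) • x k + (s * β k) • y k with hwt
    have hwt_norm : ∀ k, ‖wt k‖ ≤ γ k * r k := by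
      intro k
      calc ‖wt k‖ ≤ ‖(t * α k) • x k‖ + ‖(s * β k) • y k‖ := norm_add_le _ _
        _ = |t * α k| * ‖x k‖ + |s * β k| * ‖y k‖ := by
            rw [norm_smul, norm_smul, Real.norm_eq_abs, Real.norm_eq_abs]
        _ ≤ |t * α k| * r k + |s * β k| * r k := by
            gcongr
            exacts [(hx k).2, (hy k).2]
        _ = (t * |α k| + s * |β k|) * r k := by
            rw [abs_mul, abs_mul, abs_of_nonneg ht, abs_of_nonneg hs]; ring
        _ ≤ γ k * r k := by
            gcongr ?_ * r k
            · exact (hr k).le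
            · exact key t s |α k| |β k| ht hs hts (abs_nonneg _) (abs_nonneg _)
    have hγ_zero : ∀ k, γ k = 0 → wt k = 0 := by
      intro k hk
      have huk : u k = 0 := by
        have h := hγp k
        rw [abs_of_nonneg (hγ0 k), hk, Real.zero_rpow hpne] at h
        exact h.symm
      have huk' : t * |α k| ^ p + s * |β k| ^ p = 0 := huk
      have hA : 0 ≤ t * |α k| ^ p := mul_nonneg ht (Real.rpow_nonneg (abs_nonneg _) p)
      have hB : 0 ≤ s * |β k| ^ p := mul_nonneg hs (Real.rpow_nonneg (abs_nonneg _) p)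
      have h1 : t * |α k| ^ p = 0 := by linarith
      have h2 : s * |β k| ^ p = 0 := by linarith
      have hta : t * α k = 0 := by
        rcases mul_eq_zero.1 h1 with h | h
        · rw [h, zero_mul]
        · have := (Real.rpow_eq_zero_iff_of_nonneg (abs_nonneg (α k))).1 h
          rw [abs_eq_zero.1 this.1, mul_zero]
      have hsb : s * β k = 0 := by
        rcases mul_eq_zero.1 h2 with h | h
        · rw [h, zero_mul]
        · have := (Real.rpow_eq_zero_iff_of_nonneg (abs_nonneg (β k))).1 h
          rw [abs_eq_zero.1 this.1, mul_zero]
      simp [hwt, hta, hsb]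
    set z : ℕ → X := fun k => if h : γ k = 0 then 0 else (γ k)⁻¹ • wt k with hz
    have hγz : ∀ k, γ k • z k = wt k := by
      intro k
      by_cases h : γ k = 0
      · simp [hz, h, hγ_zero k h]
      · simp only [hz, dif_neg h, smul_smul]
        rw [mul_inv_cancel₀ h, one_smul]
    have hzmem : ∀ k, z k ∈ Xs k ∧ ‖z k‖ ≤ r k := by
      intro k
      by_cases h : γ k = 0
      · simp only [hz, dif_pos h]
        exact ⟨(Xs k).zero_mem, by simp [(hr k).le]⟩
      · have hγpos : 0 < γ k := lt_of_le_of_ne (hγ0 k) (Ne.symm h)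
        simp only [hz, dif_neg h]
        refine ⟨(Xs k).smul_mem _ ((Xs k).add_mem ((Xs k).smul_mem _ (hx k).1)
          ((Xs k).smul_mem _ (hy k).1)), ?_⟩
        rw [norm_smul, Real.norm_eq_abs, abs_of_nonneg (inv_nonneg.2 (hγ0 k))]
        calc (γ k)⁻¹ * ‖wt k‖ ≤ (γ k)⁻¹ * (γ k * r k) := by
              gcongr; exact hwt_norm k
          _ = r k := by field_simp
    have hγs : Summable fun k => |γ k| ^ p :=
      Summable.congr ((hαs.mul_left t).add (hβs.mul_left s)) fun k => (hγp k).symm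
    have hγt : (∑' k, |γ k| ^ p) ≤ 1 := by
      have heq : (∑' k, |γ k| ^ p) = t * (∑' k, |α k| ^ p) + s * (∑' k, |β k| ^ p) := by
        rw [tsum_congr fun k => hγp k, Summable.tsum_add (hαs.mul_left t) (hβs.mul_left s),
          tsum_mul_left, tsum_mul_left]
      rw [heq]
      calc t * (∑' k, |α k| ^ p) + s * (∑' k, |β k| ^ p) ≤ t * 1 + s * 1 := by
            gcongr
        _ = 1 := by rw [mul_one, mul_one, hts]
    refine ⟨γ, z, hzmem, hγs, hγt, ?_⟩
    have h1 : HasSum (fun k => (t * α k) • x k) (t • v) := by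
      simpa [smul_smul] using hvsum.const_smul t
    have h2 : HasSum (fun k => (s * β k) • y k) (s • w) := by
      simpa [smul_smul] using hwsum.const_smul s
    have hfun : (fun k => γ k • z k) = wt := funext hγz
    rw [hfun]
    exact h1.add h2
  · -- Symmetry
    have hneg : ∀ v, v ∈ {v : X | ∃ (α : ℕ → ℝ) (x : ℕ → X),
        (∀ k, x k ∈ Xs k ∧ ‖x k‖ ≤ r k) ∧
        (Summable fun k => |α k| ^ p) ∧ (∑' k, |α k| ^ p) ≤ 1 ∧
        HasSum (fun k => α k • x k) v} → -v ∈ {v : X | ∃ (α : ℕ → ℝ) (x : ℕ → X),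
        (∀ k, x k ∈ Xs k ∧ ‖x k‖ ≤ r k) ∧
        (Summable fun k => |α k| ^ p) ∧ (∑' k, |α k| ^ p) ≤ 1 ∧
        HasSum (fun k => α k • x k) v} := by
      rintro v ⟨α, x, hx, hs, hts, hsum⟩
      refine ⟨fun k => -α k, x, hx, by simpa using hs, by simpa using hts, ?_⟩
      simpa [neg_smul] using hsum.neg
    ext v
    simp only [Set.mem_neg]
    exact ⟨fun h => by simpa using hneg _ h, fun h => by simpa using hneg _ h⟩
end

section
/- Let V be a nonempty compact, convex, symmetric (−V = V) subset of a real Banach space X, and let W be the linear span of V. Then the Minkowski functional of V, restricted to W, is a norm on W (it is finite, positively homogeneous, subadditive, and vanishes only at 0), and W is complete with respect to this norm: every sequence in W that is Cauchy with respect to the Minkowski functional of V converges, with respect to the Minkowski functional of V, to an element of W. -/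
open scoped Pointwise

/-- Let `V` be a nonempty compact, convex, symmetric subset of a real Banach space `X` and
let `W` be its linear span.  Then the Minkowski functional (gauge) of `V` is a norm on `W`
(finite, homogeneous, subadditive, vanishing only at `0`), and `W` is complete with respect
to it. -/
theorem stmt_8 (X : Type*) [NormedAddCommGroup X] [NormedSpace ℝ X] [CompleteSpace X]
    (V : Set X) (hne : V.Nonempty) (hcomp : IsCompact V) (hconv : Convex ℝ V)
    (hsymm : -V = V) (W : Submodule ℝ X) (hW : W = Submodule.span ℝ V) :
    (∀ w ∈ W, ∃ c : ℝ, 0 < c ∧ w ∈ c • V) ∧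
    (∀ w ∈ W, ∀ c : ℝ, 0 ≤ c → gauge V (c • w) = c * gauge V w) ∧
    (∀ w ∈ W, gauge V (-w) = gauge V w) ∧
    (∀ w₁ ∈ W, ∀ w₂ ∈ W, gauge V (w₁ + w₂) ≤ gauge V w₁ + gauge V w₂) ∧
    (∀ w ∈ W, gauge V w = 0 → w = 0) ∧
    (∀ f : ℕ → X, (∀ n, f n ∈ W) →
      (∀ ε : ℝ, 0 < ε → ∃ N : ℕ, ∀ m ≥ N, ∀ n ≥ N, gauge V (f m - f n) < ε) →
      ∃ w ∈ W, ∀ ε : ℝ, 0 < ε → ∃ N : ℕ, ∀ n ≥ N, gauge V (f n - w) < ε) := by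
  subst hW
  -- symmetry in pointwise form
  have hsym' : ∀ x ∈ V, -x ∈ V := by
    intro x hx
    rw [← hsymm]
    exact Set.neg_mem_neg.2 hx
  -- 0 ∈ V
  obtain ⟨v, hv⟩ := hne
  have h0 : (0 : X) ∈ V := by
    have := hconv hv (hsym' v hv) (by norm_num : (0:ℝ) ≤ 1/2)
      (by norm_num : (0:ℝ) ≤ 1/2) (by norm_num)
    simpa using this
  -- V bounded
  obtain ⟨R, hR⟩ := hcomp.isBounded.subset_closedBall 0
  set R' : ℝ := max R 0 with hR'def
  have hR'0 : 0 ≤ R' := le_max_right _ _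
  have hRV : ∀ u ∈ V, ‖u‖ ≤ R' := by
    intro u hu
    have := hR hu
    rw [Metric.mem_closedBall, dist_zero_right] at this
    exact this.trans (le_max_left _ _)
  -- monotonicity of dilates
  have hmono : ∀ (a b : ℝ), 0 ≤ a → a ≤ b → 0 < b → a • V ⊆ b • V := by
    rintro a b ha hab hb x ⟨u, hu, rfl⟩
    have hmem : (a / b) • u ∈ V := hconv.smul_mem_of_zero_mem h0 hu
      ⟨div_nonneg ha hb.le, div_le_one_of_le₀ hab hb.le⟩
    refine ⟨(a / b) • u, hmem, ?_⟩
    show b • ((a / b) • u) = a • u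
    rw [smul_smul, mul_div_cancel₀ _ hb.ne']
  -- absorbency on the span
  have habs : ∀ w ∈ Submodule.span ℝ V, ∃ c : ℝ, 0 < c ∧ w ∈ c • V := by
    intro w hw
    induction hw using Submodule.span_induction with
    | mem x hx => exact ⟨1, one_pos, x, hx, one_smul ℝ x⟩
    | zero => exact ⟨1, one_pos, 0, h0, smul_zero 1⟩
    | add x y hx hy ihx ihy =>
      obtain ⟨c₁, hc₁, hx'⟩ := ihx
      obtain ⟨c₂, hc₂, hy'⟩ := ihy
      refine ⟨c₁ + c₂, by linarith, ?_⟩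
      rw [hconv.add_smul hc₁.le hc₂.le]
      exact Set.add_mem_add hx' hy'
    | smul a x hx ihx =>
      obtain ⟨c, hc, u, hu, rfl⟩ := ihx
      rcases lt_trichotomy a 0 with h | h | h
      · refine ⟨(-a) * c, mul_pos (neg_pos.2 h) hc, -u, hsym' u hu, ?_⟩
        show ((-a) * c) • (-u) = a • c • u
        rw [smul_neg, ← neg_smul, neg_mul, neg_neg, smul_smul]
      · refine ⟨1, one_pos, 0, h0, ?_⟩
        show (1:ℝ) • (0:X) = a • c • u
        rw [h, zero_smul, smul_zero]
      · refine ⟨a * c, by positivity, u, hu, ?_⟩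
        show (a * c) • u = a • c • u
        rw [smul_smul]
  -- lower approximation of gauge by actual memberships
  have hlt : ∀ z ∈ Submodule.span ℝ V, ∀ ε : ℝ, gauge V z < ε →
      ∃ a : ℝ, 0 < a ∧ a < ε ∧ z ∈ a • V := by
    intro z hz ε hε
    obtain ⟨c, hc, hcz⟩ := habs z hz
    have hne' : {r ∈ Set.Ioi (0:ℝ) | z ∈ r • V}.Nonempty := ⟨c, hc, hcz⟩
    rw [gauge_def] at hε
    obtain ⟨a, ⟨ha0, haz⟩, ha⟩ := exists_lt_of_csInf_lt hne' hε
    exact ⟨a, ha0, ha, haz⟩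
  -- norm bound from gauge membership
  have hnorm : ∀ (z : X) (a : ℝ), 0 ≤ a → z ∈ a • V → ‖z‖ ≤ a * R' := by
    rintro z a ha ⟨u, hu, rfl⟩
    rw [norm_smul, Real.norm_eq_abs, abs_of_nonneg ha]
    exact mul_le_mul_of_nonneg_left (hRV u hu) ha
  refine ⟨habs, ?_, ?_, ?_, ?_, ?_⟩
  · intro w _ c hc
    have := gauge_smul_of_nonneg (s := V) hc w
    rwa [smul_eq_mul] at this
  · intro w _
    exact gauge_neg hsym' w
  · -- subadditivity
    intro w₁ hw₁ w₂ hw₂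
    refine le_of_forall_pos_le_add fun ε hε => ?_
    obtain ⟨a, ha0, ha, haw⟩ := hlt w₁ hw₁ (gauge V w₁ + ε / 2) (by linarith)
    obtain ⟨b, hb0, hb, hbw⟩ := hlt w₂ hw₂ (gauge V w₂ + ε / 2) (by linarith)
    have hsum : w₁ + w₂ ∈ (a + b) • V := by
      rw [hconv.add_smul ha0.le hb0.le]
      exact Set.add_mem_add haw hbw
    have := gauge_le_of_mem (by positivity : (0:ℝ) ≤ a + b) hsum
    linarith
  · -- definiteness
    intro w hw hg
    by_contra hne0
    have hwpos : 0 < ‖w‖ := norm_pos_iff.2 hne0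
    have hεpos : 0 < ‖w‖ / (R' + 1) := by positivity
    obtain ⟨a, ha0, ha, haw⟩ := hlt w hw _ (hg ▸ hεpos)
    have h1 : ‖w‖ ≤ a * R' := hnorm w a ha0.le haw
    have h2 : a * R' < (‖w‖ / (R' + 1)) * (R' + 1) := by
      calc a * R' ≤ a * (R' + 1) := by nlinarith
        _ < (‖w‖ / (R' + 1)) * (R' + 1) := by
            apply mul_lt_mul_of_pos_right ha; linarith
    rw [div_mul_cancel₀ _ (by linarith : R' + 1 ≠ 0)] at h2
    linarith
  · -- completeness
    intro f hf hcauchy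
    have hsub : ∀ m n, f m - f n ∈ Submodule.span ℝ V :=
      fun m n => Submodule.sub_mem _ (hf m) (hf n)
    -- f is Cauchy in norm
    have hC : CauchySeq f := by
      rw [Metric.cauchySeq_iff]
      intro δ hδ
      have hεpos : 0 < δ / (R' + 1) := by positivity
      obtain ⟨N, hN⟩ := hcauchy _ hεpos
      refine ⟨N, fun m hm n hn => ?_⟩
      obtain ⟨a, ha0, ha, haw⟩ := hlt _ (hsub m n) _ (hN m hm n hn)
      have h1 : ‖f m - f n‖ ≤ a * R' := hnorm _ a ha0.le haw
      have h2 : a * R' < (δ / (R' + 1)) * (R' + 1) := by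
        calc a * R' ≤ a * (R' + 1) := by nlinarith
          _ < (δ / (R' + 1)) * (R' + 1) := by
              apply mul_lt_mul_of_pos_right ha; linarith
      rw [div_mul_cancel₀ _ (by linarith : R' + 1 ≠ 0)] at h2
      rw [dist_eq_norm]
      linarith
    obtain ⟨x, hx⟩ := cauchySeq_tendsto_of_complete hC
    -- key: tails land in ε • V around x
    have hkey : ∀ ε : ℝ, 0 < ε → ∃ N : ℕ, ∀ n ≥ N, f n - x ∈ ε • V := by
      intro ε hε
      obtain ⟨N, hN⟩ := hcauchy ε hε
      refine ⟨N, fun n hn => ?_⟩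
      have hclosed : IsClosed (ε • V) := by
        have : IsCompact (ε • V) := by
          rw [← Set.image_smul]
          exact hcomp.image (continuous_const_smul ε)
        exact this.isClosed
      have htend : Filter.Tendsto (fun m => f n - f m) Filter.atTop (nhds (f n - x)) :=
        Filter.Tendsto.sub tendsto_const_nhds hx
      refine hclosed.mem_of_tendsto htend ?_
      filter_upwards [Filter.eventually_ge_atTop N] with m hm
      obtain ⟨a, ha0, ha, haw⟩ := hlt _ (hsub n m) _ (hN n hn m hm)
      exact hmono a ε ha0.le ha.le hε haw
    -- x ∈ span
    obtain ⟨N₀, hN₀⟩ := hkey 1 one_pos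
    have hxW : x ∈ Submodule.span ℝ V := by
      have hmem := hN₀ N₀ le_rfl
      obtain ⟨u, hu, hux⟩ := hmem
      have hux' : (1:ℝ) • u = f N₀ - x := hux
      have huW : (1:ℝ) • u ∈ Submodule.span ℝ V :=
        Submodule.smul_mem _ 1 (Submodule.subset_span hu)
      have : x = f N₀ - (1:ℝ) • u := by rw [hux']; abel
      rw [this]
      exact Submodule.sub_mem _ (hf N₀) huW
    refine ⟨x, hxW, fun ε hε => ?_⟩
    obtain ⟨N, hN⟩ := hkey (ε / 2) (by linarith)
    refine ⟨N, fun n hn => ?_⟩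
    have := gauge_le_of_mem (by linarith : (0:ℝ) ≤ ε / 2) (hN n hn)
    linarith
end

section
/- Let 1 < p < ∞, let X be a real Banach space, and let X₁ ⊆ X₂ ⊆ X₃ ⊆ ⋯ be finite-dimensional linear subspaces of X. For 0 < t < 1 define V_t = { ∑_{k=1}^∞ α_k a_k/‖a_k‖^t : for each k, a_k ∈ X_k with ‖a_k‖ ≤ (1/2)^{k−1} (with the convention that the k-th summand is 0 when a_k = 0), and ∑_{k=1}^∞ |α_k|^p ≤ 1 }, and define Q_t : (⊕_k X_k)_{ℓ^p} → X by Q_t((x_k)_k) = ∑_{k=1}^∞ (1/2)^{(1−t)(k−1)} x_k. Then for every s ∈ (0,1) and every x ∈ (⊕_k X_k)_{ℓ^p}, the Minkowski functional of V_t evaluated at Q_t x − Q_s x tends to 0 as t tends to s from the right: lim_{t→s⁺} gauge_{V_t}(Q_t x − Q_s x) = 0. -/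
open scoped ENNReal Topology

variable (X : Type*) [NormedAddCommGroup X] [NormedSpace ℝ X]

/-- The set `V_t = { ∑ α k • (a k / ‖a k‖ ^ t) : a k ∈ Xs k, ‖a k‖ ≤ (1/2) ^ k,
∑ |α k| ^ p ≤ 1 }` (indices `k = 0, 1, 2, …` corresponding to `k−1` for `k ≥ 1` in the
classical notation). -/
def Vset (Xs : ℕ → Submodule ℝ X) (p t : ℝ) : Set X :=
  {v | ∃ (α : ℕ → ℝ) (a : ℕ → X),
    (∀ k, a k ∈ Xs k ∧ ‖a k‖ ≤ (1 / 2 : ℝ) ^ k) ∧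
    (Summable fun k => |α k| ^ p) ∧ (∑' k, |α k| ^ p) ≤ 1 ∧
    HasSum (fun k => (α k * (‖a k‖ ^ t)⁻¹) • a k) v}

/-- The map `Q_t : (⊕ₖ Xs k)_{ℓᵖ} → X`, `Q_t ((x k)) = ∑ k, (1/2) ^ ((1 - t) * k) • x k`. -/
noncomputable def Qmap (Xs : ℕ → Submodule ℝ X) (p : ℝ) (t : ℝ)
    (f : lp (fun k => (Xs k : Type _)) (ENNReal.ofReal p)) : X :=
  ∑' k : ℕ, ((1 / 2 : ℝ) ^ ((1 - t) * (k : ℝ))) • (f k : X)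

open Filter in
/-- Summability of the terms defining `Qmap` for `u < 1`. -/
theorem Qmap_summable [CompleteSpace X]
    (p : ℝ) (hp : 1 < p) [Fact (1 ≤ ENNReal.ofReal p)]
    (Xs : ℕ → Submodule ℝ X) (u : ℝ) (hu : u < 1)
    (x : lp (fun k => (Xs k : Type _)) (ENNReal.ofReal p)) :
    Summable fun k : ℕ => ((1 / 2 : ℝ) ^ ((1 - u) * (k : ℝ))) • (x k : X) := by
  have hbk : ∀ k, ‖(x k : X)‖ ≤ ‖x‖ := by
    intro k
    have := lp.norm_apply_le_norm (p := ENNReal.ofReal p)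
      (by simp only [ne_eq, ENNReal.ofReal_eq_zero, not_le]; linarith) x k
    exact this
  have hr : (0:ℝ) < (1/2:ℝ) ^ (1-u) := Real.rpow_pos_of_pos (by norm_num) _
  have hr1 : (1/2:ℝ) ^ (1-u) < 1 :=
    Real.rpow_lt_one (by norm_num) (by norm_num) (by linarith)
  apply Summable.of_norm
  apply Summable.of_nonneg_of_le (fun k => norm_nonneg _) (fun k => ?_)
    ((summable_geometric_of_lt_one hr.le hr1).mul_right ‖x‖)
  rw [norm_smul, Real.norm_eq_abs,
    abs_of_pos (Real.rpow_pos_of_pos (by norm_num) _)]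
  have he : ((1/2:ℝ) ^ (1-u)) ^ k = (1/2:ℝ) ^ ((1 - u) * (k:ℝ)) := by
    rw [Real.rpow_mul (by norm_num), Real.rpow_natCast]
  rw [← he]
  exact mul_le_mul_of_nonneg_left (hbk k) (pow_nonneg hr.le _)

open Filter in
/-- The key quantitative estimate on the gauge. -/
theorem gauge_QtQs_le [CompleteSpace X]
    (p : ℝ) (hp : 1 < p) [Fact (1 ≤ ENNReal.ofReal p)]
    (Xs : ℕ → Submodule ℝ X)
    (s t : ℝ) (hst : s ≤ t) (ht1 : t < 1)
    (x : lp (fun k => (Xs k : Type _)) (ENNReal.ofReal p)) :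
    gauge (Vset X Xs p t) (Qmap X Xs p t x - Qmap X Xs p s x) ≤
      (∑' k : ℕ, |(1 - (1/2:ℝ) ^ ((t - s) * (k:ℝ))) * ‖(x k : X)‖| ^ p) ^ (1/p) := by
  have hp0 : (0:ℝ) < p := lt_trans one_pos hp
  set α : ℕ → ℝ := fun k => (1 - (1/2:ℝ) ^ ((t - s) * (k:ℝ))) * ‖(x k : X)‖ with hαdef
  set a : ℕ → X := fun k => ((1/2:ℝ)^k * ‖(x k : X)‖⁻¹) • (x k : X) with hadef
  have hB : ∀ k : ℕ, 0 < (1/2:ℝ) ^ ((t-s)*(k:ℝ)) ∧ (1/2:ℝ) ^ ((t-s)*(k:ℝ)) ≤ 1 := fun k =>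
    ⟨Real.rpow_pos_of_pos (by norm_num) _,
     Real.rpow_le_one (by norm_num) (by norm_num)
       (mul_nonneg (sub_nonneg.2 hst) (Nat.cast_nonneg k))⟩
  have hαnn : ∀ k, 0 ≤ α k := fun k =>
    mul_nonneg (by linarith [(hB k).2]) (norm_nonneg _)
  have hαle : ∀ k, α k ≤ ‖(x k : X)‖ := fun k => by
    have h1 := (hB k).1; have h2 := (hB k).2
    have := norm_nonneg (x k : X)
    calc α k ≤ 1 * ‖(x k : X)‖ := by
          apply mul_le_mul_of_nonneg_right _ (norm_nonneg _); linarith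
      _ = ‖(x k : X)‖ := one_mul _
  have hsum : Summable fun k => ‖(x k : X)‖ ^ p := by
    have h := (lp.memℓp x).summable
      (by rw [ENNReal.toReal_ofReal hp0.le]; exact hp0)
    rw [ENNReal.toReal_ofReal hp0.le] at h
    exact h
  have hαp : ∀ k, |α k| ^ p ≤ ‖(x k : X)‖ ^ p := fun k =>
    Real.rpow_le_rpow (abs_nonneg _)
      (by rw [abs_of_nonneg (hαnn k)]; exact hαle k) hp0.le
  have hαsum : Summable fun k => |α k| ^ p :=
    Summable.of_nonneg_of_le (fun k => Real.rpow_nonneg (abs_nonneg _) p) hαp hsum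
  set S := ∑' k, |α k| ^ p with hSdef
  have hSnn : 0 ≤ S := tsum_nonneg fun k => Real.rpow_nonneg (abs_nonneg _) p
  -- Properties of a
  have ha_mem : ∀ k, a k ∈ Xs k := fun k =>
    Submodule.smul_mem _ _ (SetLike.coe_mem (x k))
  have ha_norm_le : ∀ k, ‖a k‖ ≤ (1/2:ℝ) ^ k := by
    intro k
    rw [hadef]
    by_cases h : (x k : X) = 0
    · simp [h]
    · have hn : (0:ℝ) < ‖(x k : X)‖ := norm_pos_iff.2 h
      rw [norm_smul, Real.norm_eq_abs, abs_of_pos (by positivity), mul_assoc,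
        inv_mul_cancel₀ hn.ne', mul_one]
  have ha_norm_eq : ∀ k, (x k : X) ≠ 0 → ‖a k‖ = (1/2:ℝ) ^ k := by
    intro k h
    have hn : (0:ℝ) < ‖(x k : X)‖ := norm_pos_iff.2 h
    rw [hadef]
    rw [norm_smul, Real.norm_eq_abs, abs_of_pos (by positivity), mul_assoc,
      inv_mul_cancel₀ hn.ne', mul_one]
  -- key pointwise identity
  have key : ∀ k : ℕ, (α k * (‖a k‖ ^ t)⁻¹) • a k =
      ((1/2:ℝ) ^ ((1-t)*(k:ℝ)) - (1/2:ℝ) ^ ((1-s)*(k:ℝ))) • (x k : X) := by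
    intro k
    by_cases h : (x k : X) = 0
    · have ha0 : a k = 0 := by simp [hadef, h]
      rw [ha0, h, smul_zero, smul_zero]
    · have hn : (0:ℝ) < ‖(x k : X)‖ := norm_pos_iff.2 h
      rw [ha_norm_eq k h]
      have hpow : ((1/2:ℝ)^k : ℝ) ^ t = (1/2:ℝ) ^ ((k:ℝ) * t) := by
        rw [Real.rpow_mul (by norm_num), Real.rpow_natCast]
      rw [hpow, hadef]
      rw [smul_smul]
      congr 1
      have e1 : ((1/2:ℝ) ^ ((k:ℝ)*t))⁻¹ * (1/2:ℝ) ^ (k:ℕ) = (1/2:ℝ) ^ ((1-t)*(k:ℝ)) := by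
        rw [← Real.rpow_natCast (1/2:ℝ) k, ← Real.rpow_neg (by norm_num),
          ← Real.rpow_add (by norm_num)]
        congr 1
        ring
      have e2 : (1/2:ℝ) ^ ((t-s)*(k:ℝ)) * (1/2:ℝ) ^ ((1-t)*(k:ℝ))
          = (1/2:ℝ) ^ ((1-s)*(k:ℝ)) := by
        rw [← Real.rpow_add (by norm_num)]
        congr 1
        ring
      have e0 : ‖(x k : X)‖ * ‖(x k : X)‖⁻¹ = 1 := mul_inv_cancel₀ hn.ne'
      calc α k * ((1/2:ℝ) ^ ((k:ℝ)*t))⁻¹ * ((1/2:ℝ)^(k:ℕ) * ‖(x k : X)‖⁻¹)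
          = (1 - (1/2:ℝ) ^ ((t-s)*(k:ℝ)))
            * (((1/2:ℝ) ^ ((k:ℝ)*t))⁻¹ * (1/2:ℝ)^(k:ℕ))
            * (‖(x k : X)‖ * ‖(x k : X)‖⁻¹) := by rw [hαdef]; ring
        _ = (1 - (1/2:ℝ) ^ ((t-s)*(k:ℝ))) * (1/2:ℝ) ^ ((1-t)*(k:ℝ)) * 1 := by
            rw [e1, e0]
        _ = (1/2:ℝ) ^ ((1-t)*(k:ℝ))
            - (1/2:ℝ) ^ ((t-s)*(k:ℝ)) * (1/2:ℝ) ^ ((1-t)*(k:ℝ)) := by ring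
        _ = (1/2:ℝ) ^ ((1-t)*(k:ℝ)) - (1/2:ℝ) ^ ((1-s)*(k:ℝ)) := by rw [e2]
  -- HasSum of the representation
  have hs1 : s < 1 := lt_of_le_of_lt hst ht1
  have hQt := (Qmap_summable X p hp Xs t ht1 x).hasSum
  have hQs := (Qmap_summable X p hp Xs s hs1 x).hasSum
  have hrep : HasSum (fun k => (α k * (‖a k‖ ^ t)⁻¹) • a k)
      (Qmap X Xs p t x - Qmap X Xs p s x) := by
    have := hQt.sub hQs
    simp only [← sub_smul] at this
    convert this using 2 with k
    rw [key k, sub_smul]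
    rfl
    rfl
  -- main bound
  apply le_of_forall_gt_imp_ge_of_dense
  intro c hc
  have hc0 : 0 < c := lt_of_le_of_lt (Real.rpow_nonneg hSnn _) hc
  have hScp : S ≤ c ^ p := by
    have h1 : (S ^ (1/p)) ^ p ≤ c ^ p :=
      Real.rpow_le_rpow (Real.rpow_nonneg hSnn _) hc.le hp0.le
    rwa [← Real.rpow_mul hSnn, one_div, inv_mul_cancel₀ hp0.ne', Real.rpow_one] at h1
  have hcp : (0:ℝ) < c ^ p := Real.rpow_pos_of_pos hc0 _
  apply gauge_le_of_mem hc0.le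
  rw [Set.mem_smul_set]
  refine ⟨c⁻¹ • (Qmap X Xs p t x - Qmap X Xs p s x), ?_, smul_inv_smul₀ hc0.ne' _⟩
  refine ⟨fun k => c⁻¹ * α k, a, fun k => ⟨ha_mem k, ha_norm_le k⟩, ?_, ?_, ?_⟩
  · have : (fun k => |c⁻¹ * α k| ^ p) = fun k => |c⁻¹| ^ p * |α k| ^ p := by
      funext k
      rw [abs_mul, Real.mul_rpow (abs_nonneg _) (abs_nonneg _)]
    rw [this]
    exact hαsum.mul_left _
  · have heq : (fun k => |c⁻¹ * α k| ^ p) = fun k => (c ^ p)⁻¹ * |α k| ^ p := by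
      funext k
      rw [abs_mul, Real.mul_rpow (abs_nonneg _) (abs_nonneg _),
        abs_of_pos (inv_pos.2 hc0), Real.inv_rpow hc0.le]
    rw [heq, tsum_mul_left]
    calc (c ^ p)⁻¹ * S ≤ (c ^ p)⁻¹ * c ^ p :=
          mul_le_mul_of_nonneg_left hScp (inv_nonneg.2 hcp.le)
      _ = 1 := inv_mul_cancel₀ hcp.ne'
  · have heq2 : (fun k => (c⁻¹ * α k * (‖a k‖ ^ t)⁻¹) • a k)
        = fun k => c⁻¹ • ((α k * (‖a k‖ ^ t)⁻¹) • a k) := by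
      funext k
      rw [mul_assoc, mul_smul]
    rw [heq2]
    exact hrep.const_smul _

open Filter in
/-- For every `s ∈ (0,1)` and every `x` in the `ℓᵖ`-direct sum,
`gauge (V_t) (Q_t x - Q_s x) → 0` as `t → s⁺`. -/
theorem stmt_12 [CompleteSpace X]
    (p : ℝ) (hp : 1 < p) [Fact (1 ≤ ENNReal.ofReal p)]
    (Xs : ℕ → Submodule ℝ X) (hfin : ∀ k, FiniteDimensional ℝ (Xs k))
    (hmono : Monotone Xs) (s : ℝ) (hs0 : 0 < s) (hs1 : s < 1)
    (x : lp (fun k => (Xs k : Type _)) (ENNReal.ofReal p)) :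
    Filter.Tendsto
      (fun t => gauge (Vset X Xs p t) (Qmap X Xs p t x - Qmap X Xs p s x))
      (𝓝[>] s) (𝓝 0) := by
  have hp0 : (0:ℝ) < p := lt_trans one_pos hp
  have hsum : Summable fun k => ‖(x k : X)‖ ^ p := by
    have h := (lp.memℓp x).summable
      (by rw [ENNReal.toReal_ofReal hp0.le]; exact hp0)
    rw [ENNReal.toReal_ofReal hp0.le] at h
    exact h
  set S : ℝ → ℝ :=
    fun t => ∑' k : ℕ, |(1 - (1/2:ℝ) ^ ((t - s) * (k:ℝ))) * ‖(x k : X)‖| ^ p with hSdef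
  -- S tends to 0
  have hS0 : Tendsto S (𝓝[>] s) (𝓝 0) := by
    have h := tendsto_tsum_of_dominated_convergence (𝓕 := 𝓝[>] s)
      (f := fun (t : ℝ) (k : ℕ) => |(1 - (1/2:ℝ) ^ ((t - s) * (k:ℝ))) * ‖(x k : X)‖| ^ p)
      (g := fun _ : ℕ => (0:ℝ)) (bound := fun k => ‖(x k : X)‖ ^ p) hsum ?_ ?_
    · simp only [tsum_zero] at h; exact h
    · intro k
      have h1 : Tendsto (fun t : ℝ => (1/2:ℝ) ^ ((t - s) * (k:ℝ))) (𝓝 s) (𝓝 1) := by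
        have hc : Continuous (fun t : ℝ => Real.exp (Real.log (1/2) * ((t - s) * (k:ℝ)))) := by
          fun_prop
        have heq : (fun t : ℝ => (1/2:ℝ) ^ ((t - s) * (k:ℝ)))
            = fun t => Real.exp (Real.log (1/2) * ((t - s) * (k:ℝ))) :=
          funext fun t => Real.rpow_def_of_pos (by norm_num) _
        rw [heq]
        have := hc.tendsto s
        simpa using this
      have h2 : Tendsto (fun y : ℝ => |(1 - y) * ‖(x k : X)‖| ^ p) (𝓝 1) (𝓝 0) := by
        have hcont0 : ContinuousAt (fun z : ℝ => z ^ p) 0 :=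
          Real.continuousAt_rpow_const _ _ (Or.inr hp0.le)
        have habs : Tendsto (fun y : ℝ => |(1 - y) * ‖(x k : X)‖|) (𝓝 1) (𝓝 0) := by
          have hc : Continuous fun y : ℝ => |(1 - y) * ‖(x k : X)‖| := by fun_prop
          have := hc.tendsto 1
          simpa using this
        have := hcont0.tendsto.comp habs
        simpa [Real.zero_rpow hp0.ne', Function.comp_def] using this
      exact (h2.comp h1).mono_left nhdsWithin_le_nhds
    · filter_upwards [self_mem_nhdsWithin] with t ht k
      have hts : s ≤ t := le_of_lt ht
      have hB1 : (1/2:ℝ) ^ ((t-s)*(k:ℝ)) ≤ 1 :=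
        Real.rpow_le_one (by norm_num) (by norm_num)
          (mul_nonneg (sub_nonneg.2 hts) (Nat.cast_nonneg k))
      have hB0 : (0:ℝ) < (1/2:ℝ) ^ ((t-s)*(k:ℝ)) := Real.rpow_pos_of_pos (by norm_num) _
      have habs : |(1 - (1/2:ℝ) ^ ((t - s) * (k:ℝ))) * ‖(x k : X)‖| ≤ ‖(x k : X)‖ := by
        rw [abs_mul, abs_norm]
        calc |1 - (1/2:ℝ) ^ ((t-s)*(k:ℝ))| * ‖(x k : X)‖ ≤ 1 * ‖(x k : X)‖ := by
              apply mul_le_mul_of_nonneg_right _ (norm_nonneg _)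
              rw [abs_of_nonneg (by linarith)]; linarith
          _ = ‖(x k : X)‖ := one_mul _
      rw [Real.norm_eq_abs, abs_of_nonneg (Real.rpow_nonneg (abs_nonneg _) _)]
      exact Real.rpow_le_rpow (abs_nonneg _) habs hp0.le
  have hS1p : Tendsto (fun t => (S t) ^ (1/p)) (𝓝[>] s) (𝓝 0) := by
    have hc : ContinuousAt (fun z : ℝ => z ^ (1/p)) 0 :=
      Real.continuousAt_rpow_const 0 (1/p) (Or.inr (by positivity))
    have := hc.tendsto.comp hS0
    simpa [Real.zero_rpow (show (p:ℝ)⁻¹ ≠ 0 by positivity), Function.comp_def] using this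
  apply tendsto_of_tendsto_of_tendsto_of_le_of_le' tendsto_const_nhds hS1p
  · exact Eventually.of_forall fun t => gauge_nonneg _
  · filter_upwards [Ioo_mem_nhdsGT_of_mem (Set.mem_Ico.2 ⟨le_refl s, hs1⟩)] with t ht
    exact gauge_QtQs_le X p hp Xs s t ht.1.le ht.2 x
end

section
/- Let 1 ≤ p < ∞ and let E be a closed linear subspace of ℓ^p. Then the Bochner space L^p((0,1); E) of p-integrable E-valued functions on (0,1) is isometrically isomorphic to a closed linear subspace of L^p(0,1), i.e., there exists a linear isometry from L^p((0,1); E) into the space L^p(0,1) of p-integrable real-valued functions on (0,1). -/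
open MeasureTheory
open scoped ENNReal

namespace Stmt15Aux

noncomputable section

open Set

/-- `aSeq n = 1/(n+1)`. -/
def aSeq (n : ℕ) : ℝ := ((n : ℝ) + 1)⁻¹

lemma aSeq_pos (n : ℕ) : 0 < aSeq n := by unfold aSeq; positivity

lemma aSeq_succ_lt (n : ℕ) : aSeq (n + 1) < aSeq n := by
  unfold aSeq
  rw [inv_lt_inv₀ (by positivity) (by positivity)]
  push_cast; linarith

lemma aSeq_strictAnti : StrictAnti aSeq := strictAnti_nat_of_succ_lt aSeq_succ_lt

lemma aSeq_zero : aSeq 0 = 1 := by norm_num [aSeq]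

lemma aSeq_le_one (n : ℕ) : aSeq n ≤ 1 := by
  simpa [aSeq_zero] using aSeq_strictAnti.antitone (Nat.zero_le n)

/-- The intervals `In n = (1/(n+2), 1/(n+1))`. -/
def In (n : ℕ) : Set ℝ := Set.Ioo (aSeq (n + 1)) (aSeq n)

lemma In_measurableSet (n : ℕ) : MeasurableSet (In n) := measurableSet_Ioo

lemma In_subset (n : ℕ) : In n ⊆ Set.Ioo 0 1 := fun s hs =>
  ⟨(aSeq_pos (n + 1)).trans hs.1, hs.2.trans_le (aSeq_le_one n)⟩

lemma In_disjoint : Pairwise (Function.onFun Disjoint In) := by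
  have key : ∀ n m : ℕ, n < m → Disjoint (In n) (In m) := by
    intro n m h
    rw [Set.disjoint_left]
    rintro s ⟨hs1, _⟩ ⟨_, hs4⟩
    have : aSeq m ≤ aSeq (n + 1) := aSeq_strictAnti.antitone h
    linarith
  intro n m hnm
  rcases lt_or_gt_of_ne hnm with h | h
  · exact key n m h
  · exact (key m n h).symm

lemma mem_In_unique {s : ℝ} {n m : ℕ} (hn : s ∈ In n) (hm : s ∈ In m) : n = m := by
  by_contra h
  exact Set.disjoint_left.1 (In_disjoint h) hn hm

/-- length of `In n` -/
def len (n : ℕ) : ℝ := aSeq n - aSeq (n + 1)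

lemma len_pos (n : ℕ) : 0 < len n := sub_pos.2 (aSeq_succ_lt n)

/-- affine map sending `In n` onto `(0,1)` -/
def psi (n : ℕ) (s : ℝ) : ℝ := (s - aSeq (n + 1)) / len n

/-- affine map sending `(0,1)` onto `In n`, inverse of `psi n` -/
def phi (n : ℕ) (t : ℝ) : ℝ := len n * t + aSeq (n + 1)

lemma psi_phi (n : ℕ) (t : ℝ) : psi n (phi n t) = t := by
  unfold psi phi
  rw [add_sub_cancel_right, mul_div_cancel_left₀ _ (len_pos n).ne']

lemma measurable_psi (n : ℕ) : Measurable (psi n) := by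
  unfold psi; fun_prop

lemma measurable_phi (n : ℕ) : Measurable (phi n) := by
  unfold phi; fun_prop

lemma In_eq_preimage (n : ℕ) : In n = psi n ⁻¹' Set.Ioo 0 1 := by
  ext s
  have hl := len_pos n
  simp only [In, Set.mem_Ioo, Set.mem_preimage, psi]
  rw [div_lt_one hl, lt_div_iff₀ hl]
  constructor
  · rintro ⟨h1, h2⟩; constructor <;> [linarith; (unfold len; linarith)]
  · rintro ⟨h1, h2⟩; constructor <;> [linarith; (unfold len at h2; linarith)]

lemma psi_mem_Ioo {n : ℕ} {s : ℝ} (hs : s ∈ In n) : psi n s ∈ Set.Ioo (0:ℝ) 1 := by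
  rw [In_eq_preimage] at hs; exact hs

lemma phi_preimage_In (n : ℕ) : phi n ⁻¹' In n = Set.Ioo 0 1 := by
  ext t
  rw [Set.mem_preimage, In_eq_preimage, Set.mem_preimage, psi_phi]

lemma map_phi (n : ℕ) :
    Measure.map (phi n) (volume.restrict (Set.Ioo 0 1)) =
      ENNReal.ofReal (len n)⁻¹ • volume.restrict (In n) := by
  have hl : (len n : ℝ) ≠ 0 := (len_pos n).ne'
  have h1 : Measure.map (phi n) volume = ENNReal.ofReal |(len n)⁻¹| • volume := by
    have hcomp : phi n = (fun x => x + aSeq (n + 1)) ∘ (fun x => len n * x) := by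
      funext x; simp [phi]
    rw [hcomp, ← Measure.map_map (by fun_prop) (by fun_prop),
      Real.map_volume_mul_left hl, Measure.map_smul, map_add_right_eq_self]
  calc Measure.map (phi n) (volume.restrict (Set.Ioo 0 1))
      = Measure.map (phi n) (volume.restrict (phi n ⁻¹' In n)) := by
        rw [phi_preimage_In]
    _ = (Measure.map (phi n) volume).restrict (In n) :=
        (Measure.restrict_map (measurable_phi n) (In_measurableSet n)).symm
    _ = ENNReal.ofReal (len n)⁻¹ • volume.restrict (In n) := by
        rw [h1, Measure.restrict_smul, abs_of_pos (inv_pos.2 (len_pos n))]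

lemma lintegral_In (n : ℕ) (h : ℝ → ℝ≥0∞) (hm : Measurable h) :
    ∫⁻ s in In n, h (psi n s) = ENNReal.ofReal (len n) * ∫⁻ t in Set.Ioo 0 1, h t := by
  have key : ∫⁻ s, h (psi n s) ∂(Measure.map (phi n) (volume.restrict (Set.Ioo 0 1)))
      = ∫⁻ t in Set.Ioo 0 1, h t := by
    rw [lintegral_map (show Measurable fun s => h (psi n s) from hm.comp (measurable_psi n)) (measurable_phi n)]
    simp_rw [psi_phi]
  rw [map_phi, lintegral_smul_measure] at key
  have hne : ENNReal.ofReal (len n) ≠ 0 := by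
    simp [ENNReal.ofReal_eq_zero, not_le, len_pos n]
  calc ∫⁻ s in In n, h (psi n s)
      = (ENNReal.ofReal (len n) * ENNReal.ofReal (len n)⁻¹) * ∫⁻ s in In n, h (psi n s) := by
        rw [← ENNReal.ofReal_mul (len_pos n).le, mul_inv_cancel₀ (len_pos n).ne',
          ENNReal.ofReal_one, one_mul]
    _ = ENNReal.ofReal (len n) * ∫⁻ t in Set.Ioo 0 1, h t := by
        rw [mul_assoc, ← key, smul_eq_mul]

lemma exists_mem_In {s : ℝ} (hs : s ∈ Set.Ioo (0:ℝ) 1) (hr : s ∉ Set.range aSeq) :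
    ∃ n, s ∈ In n := by
  obtain ⟨hs0, hs1⟩ := hs
  have hP : ∃ n, aSeq n < s := by
    obtain ⟨k, hk⟩ := exists_nat_gt (1 / s)
    refine ⟨k, ?_⟩
    have hk1 : 1 / s < (k : ℝ) + 1 := hk.trans (by linarith)
    have : (1:ℝ) / ((k:ℝ) + 1) < s := by
      rw [div_lt_iff₀ (by positivity)] at hk1 ⊢
      nlinarith
    simpa [aSeq, one_div] using this
  classical
  set m := Nat.find hP with hmdef
  have hm : aSeq m < s := Nat.find_spec hP
  have hm0 : m ≠ 0 := by
    intro h0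
    have := hm
    rw [h0, aSeq_zero] at this
    linarith
  obtain ⟨j, hj'⟩ : ∃ j, m = j + 1 := ⟨m - 1, (Nat.succ_pred_eq_of_pos (Nat.pos_of_ne_zero hm0)).symm⟩
  rw [hj'] at hm
  have hj : ¬ aSeq j < s := by
    have := Nat.find_min hP (m := j) (by omega)
    simpa using this
  push_neg at hj
  have hne : s ≠ aSeq j := fun h => hr ⟨j, h.symm⟩
  exact ⟨j, hm, lt_of_le_of_ne hj hne⟩

lemma Ioo_ae_eq_iUnion : Set.Ioo (0:ℝ) 1 =ᵐ[volume] ⋃ n, In n := by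
  have h1 : (⋃ n, In n) ⊆ Set.Ioo (0:ℝ) 1 := Set.iUnion_subset In_subset
  have h2 : Set.Ioo (0:ℝ) 1 \ (⋃ n, In n) ⊆ Set.range aSeq := by
    intro s hs
    by_contra hr
    exact hs.2 (Set.mem_iUnion.2 (exists_mem_In hs.1 hr))
  have hz : volume (Set.Ioo (0:ℝ) 1 \ ⋃ n, In n) = 0 :=
    measure_mono_null h2 ((Set.countable_range aSeq).measure_zero _)
  refine (MeasureTheory.ae_eq_set).2 ⟨hz, ?_⟩
  rw [Set.diff_eq_empty.2 h1]
  simp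

variable {p : ℝ≥0∞}

lemma continuous_coord (p : ℝ≥0∞) [Fact (1 ≤ p)] (m : ℕ) :
    Continuous fun x : lp (fun _ : ℕ => ℝ) p => x m := by
  have hp0 : p ≠ 0 := (lt_of_lt_of_le zero_lt_one (Fact.out : 1 ≤ p)).ne'
  apply (LipschitzWith.of_dist_le_mul (K := 1) fun x y => ?_).continuous
  rw [NNReal.coe_one, one_mul, dist_eq_norm, dist_eq_norm]
  have : x m - y m = (x - y) m := by simp [lp.coeFn_sub]
  rw [this]
  exact lp.norm_apply_le_norm hp0 (x - y) m

/-- The building block of the embedding. -/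
def term (p : ℝ≥0∞) (f : ℝ → lp (fun _ : ℕ => ℝ) p) (n : ℕ) (s : ℝ) : ℝ :=
  (In n).indicator (fun u => (len n) ^ (-(1 / p.toReal)) * f (psi n u) n) s

/-- The scalar function encoding an `ℓᵖ`-valued function. -/
def G (p : ℝ≥0∞) (f : ℝ → lp (fun _ : ℕ => ℝ) p) (s : ℝ) : ℝ :=
  ∑' n, term p f n s

lemma term_eq_zero {f : ℝ → lp (fun _ : ℕ => ℝ) p} {n : ℕ} {s : ℝ} (hs : s ∉ In n) :
    term p f n s = 0 := Set.indicator_of_notMem hs _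

lemma G_eq_of_mem {f : ℝ → lp (fun _ : ℕ => ℝ) p} {m : ℕ} {s : ℝ} (hs : s ∈ In m) :
    G p f s = (len m) ^ (-(1 / p.toReal)) * f (psi m s) m := by
  unfold G
  rw [tsum_eq_single m fun n hnm => term_eq_zero fun hn => hnm (mem_In_unique hn hs)]
  exact Set.indicator_of_mem hs _

lemma G_eq_zero {f : ℝ → lp (fun _ : ℕ => ℝ) p} {s : ℝ} (hs : ∀ n, s ∉ In n) :
    G p f s = 0 := by
  unfold G
  have : ∀ n, term p f n s = 0 := fun n => term_eq_zero (hs n)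
  simp [this]

lemma G_add (f g : ℝ → lp (fun _ : ℕ => ℝ) p) (s : ℝ) :
    G p (f + g) s = G p f s + G p g s := by
  by_cases h : ∃ m, s ∈ In m
  · obtain ⟨m, hm⟩ := h
    rw [G_eq_of_mem hm, G_eq_of_mem hm, G_eq_of_mem hm]
    simp only [Pi.add_apply, lp.coeFn_add]
    ring
  · push_neg at h
    rw [G_eq_zero h, G_eq_zero h, G_eq_zero h]; ring

lemma G_smul (c : ℝ) (f : ℝ → lp (fun _ : ℕ => ℝ) p) (s : ℝ) :
    G p (c • f) s = c * G p f s := by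
  by_cases h : ∃ m, s ∈ In m
  · obtain ⟨m, hm⟩ := h
    rw [G_eq_of_mem hm, G_eq_of_mem hm]
    simp only [Pi.smul_apply, lp.coeFn_smul, smul_eq_mul]
    ring
  · push_neg at h
    rw [G_eq_zero h, G_eq_zero h]; ring

lemma summable_term (f : ℝ → lp (fun _ : ℕ => ℝ) p) (s : ℝ) :
    Summable fun n => term p f n s := by
  classical
  by_cases h : ∃ m, s ∈ In m
  · refine summable_of_ne_finset_zero (s := {h.choose}) fun n hn => ?_
    simp only [Finset.mem_singleton] at hn
    exact term_eq_zero fun hmem => hn (mem_In_unique hmem h.choose_spec)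
  · push_neg at h
    refine summable_of_ne_finset_zero (s := ∅) fun n _ => term_eq_zero (h n)

lemma measurable_term [Fact (1 ≤ p)] {f : ℝ → lp (fun _ : ℕ => ℝ) p}
    (hf : StronglyMeasurable f) (n : ℕ) : Measurable (term p f n) := by
  apply Measurable.indicator _ (In_measurableSet n)
  exact measurable_const.mul
    (((continuous_coord p n).comp_stronglyMeasurable
      (hf.comp_measurable (measurable_psi n))).measurable)

lemma measurable_G [Fact (1 ≤ p)] {f : ℝ → lp (fun _ : ℕ => ℝ) p}
    (hf : StronglyMeasurable f) : Measurable (G p f) := by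
  apply measurable_of_tendsto_metrizable
    (f := fun k s => ∑ n ∈ Finset.range k, term p f n s)
  · exact fun k => Finset.measurable_sum _ fun n _ => measurable_term hf n
  · rw [tendsto_pi_nhds]
    exact fun s => (summable_term f s).hasSum.tendsto_sum_nat

lemma G_congr_ae {f g : ℝ → lp (fun _ : ℕ => ℝ) p}
    (h : f =ᵐ[volume.restrict (Set.Ioo 0 1)] g) :
    G p f =ᵐ[volume.restrict (Set.Ioo 0 1)] G p g := by
  set μ := volume.restrict (Set.Ioo (0:ℝ) 1) with hμ
  have hN : μ {t | f t ≠ g t} = 0 := h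
  set N := toMeasurable μ {t | f t ≠ g t} ∩ Set.Ioo 0 1 with hNdef
  have hNvol : volume N = 0 := by
    have h1 : μ (toMeasurable μ {t | f t ≠ g t}) = 0 := by
      rw [measure_toMeasurable]; exact hN
    rw [hμ, Measure.restrict_apply (measurableSet_toMeasurable _ _)] at h1
    exact h1
  have hsub : {s | G p f s ≠ G p g s} ⊆ ⋃ n, psi n ⁻¹' N := by
    intro s hs
    simp only [Set.mem_setOf_eq] at hs
    by_cases hex : ∃ m, s ∈ In m
    · obtain ⟨m, hm⟩ := hex
      refine Set.mem_iUnion.2 ⟨m, ?_⟩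
      by_contra hmem
      have hfg : f (psi m s) = g (psi m s) := by
        by_contra hne
        exact hmem ⟨subset_toMeasurable _ _ hne, psi_mem_Ioo hm⟩
      exact hs (by rw [G_eq_of_mem hm, G_eq_of_mem hm, hfg])
    · push_neg at hex
      exact absurd (by rw [G_eq_zero hex, G_eq_zero hex]) hs
  have hvol : volume (⋃ n, psi n ⁻¹' N) = 0 := by
    apply measure_iUnion_null
    intro n
    have hl : (len n)⁻¹ ≠ 0 := inv_ne_zero (len_pos n).ne'
    have hdecomp : psi n ⁻¹' N = (fun s : ℝ => s + -(aSeq (n+1))) ⁻¹' ((· * (len n)⁻¹) ⁻¹' N) := by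
      ext s; simp [psi, div_eq_mul_inv, sub_eq_add_neg]
    rw [hdecomp]
    have hmul : volume ((· * (len n)⁻¹) ⁻¹' N) = 0 := by
      rw [Real.volume_preimage_mul_right hl, hNvol, mul_zero]
    calc volume ((fun s : ℝ => s + -(aSeq (n+1))) ⁻¹' ((· * (len n)⁻¹) ⁻¹' N))
        = volume ((· * (len n)⁻¹) ⁻¹' N) := measure_preimage_add_right _ _ _
      _ = 0 := hmul
  have hμnull : μ {s | G p f s ≠ G p g s} = 0 := by
    have h1 : μ {s | G p f s ≠ G p g s} ≤ volume {s | G p f s ≠ G p g s} :=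
      Measure.restrict_le_self _
    have h2 : volume {s | G p f s ≠ G p g s} = 0 := measure_mono_null hsub hvol
    exact le_antisymm (h1.trans h2.le) zero_le
  exact hμnull

lemma nnnorm_coord_tsum [Fact (1 ≤ p)] (hr : 0 < p.toReal) (x : lp (fun _ : ℕ => ℝ) p) :
    ∑' n, (‖x n‖₊ : ℝ≥0∞) ^ p.toReal = (‖x‖₊ : ℝ≥0∞) ^ p.toReal := by
  have h := lp.norm_rpow_eq_tsum hr x
  have hconv : ∀ y : ℝ, (‖y‖₊ : ℝ≥0∞) ^ p.toReal = ENNReal.ofReal (‖y‖ ^ p.toReal) := by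
    intro y
    rw [← enorm_eq_nnnorm, ← ofReal_norm, ENNReal.ofReal_rpow_of_nonneg (norm_nonneg y) hr.le]
  have hconv' : ((‖x‖₊ : ℝ≥0∞)) ^ p.toReal = ENNReal.ofReal (‖x‖ ^ p.toReal) := by
    rw [← enorm_eq_nnnorm, ← ofReal_norm, ENNReal.ofReal_rpow_of_nonneg (norm_nonneg x) hr.le]
  rw [hconv', h, ENNReal.ofReal_tsum_of_nonneg (fun n => by positivity)
    ((lp.memℓp x).summable hr)]
  exact tsum_congr fun n => hconv (x n)

lemma enorm_G_of_mem [Fact (1 ≤ p)] (hp' : p ≠ ∞) {f : ℝ → lp (fun _ : ℕ => ℝ) p}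
    {m : ℕ} {s : ℝ} (hs : s ∈ In m) :
    (‖G p f s‖₊ : ℝ≥0∞) ^ p.toReal
      = ENNReal.ofReal (len m)⁻¹ * (‖f (psi m s) m‖₊ : ℝ≥0∞) ^ p.toReal := by
  have hr : 0 < p.toReal :=
    ENNReal.toReal_pos ((lt_of_lt_of_le zero_lt_one (Fact.out : 1 ≤ p)).ne') hp'
  have hlpos : (0:ℝ) < (len m) ^ (-(1 / p.toReal)) := Real.rpow_pos_of_pos (len_pos m) _
  rw [G_eq_of_mem hs, nnnorm_mul, ENNReal.coe_mul,
    ENNReal.mul_rpow_of_nonneg _ _ hr.le]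
  congr 1
  rw [← enorm_eq_nnnorm, ← ofReal_norm, Real.norm_of_nonneg hlpos.le,
    ENNReal.ofReal_rpow_of_pos hlpos]
  have hexp : (-(1 / p.toReal)) * p.toReal = -1 := by field_simp
  rw [← Real.rpow_mul (len_pos m).le, hexp, Real.rpow_neg_one]

lemma G_lintegral [Fact (1 ≤ p)] (hp' : p ≠ ∞) {f : ℝ → lp (fun _ : ℕ => ℝ) p}
    (hf : StronglyMeasurable f) :
    ∫⁻ s in Set.Ioo 0 1, (‖G p f s‖₊ : ℝ≥0∞) ^ p.toReal
      = ∫⁻ t in Set.Ioo 0 1, (‖f t‖₊ : ℝ≥0∞) ^ p.toReal := by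
  have hr : 0 < p.toReal :=
    ENNReal.toReal_pos ((lt_of_lt_of_le zero_lt_one (Fact.out : 1 ≤ p)).ne') hp'
  have hcoordmeas : ∀ n : ℕ, Measurable fun t : ℝ => (‖f t n‖₊ : ℝ≥0∞) ^ p.toReal := by
    intro n
    exact ((((continuous_coord p n).comp_stronglyMeasurable
      hf).measurable).nnnorm.coe_nnreal_ennreal).pow_const _
  calc ∫⁻ s in Set.Ioo 0 1, (‖G p f s‖₊ : ℝ≥0∞) ^ p.toReal
      = ∫⁻ s in ⋃ n, In n, (‖G p f s‖₊ : ℝ≥0∞) ^ p.toReal := by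
        rw [Measure.restrict_congr_set Ioo_ae_eq_iUnion]
    _ = ∑' n, ∫⁻ s in In n, (‖G p f s‖₊ : ℝ≥0∞) ^ p.toReal :=
        lintegral_iUnion In_measurableSet In_disjoint _
    _ = ∑' n, ∫⁻ s in In n,
          ENNReal.ofReal (len n)⁻¹ * (‖f (psi n s) n‖₊ : ℝ≥0∞) ^ p.toReal := by
        refine tsum_congr fun n => setLIntegral_congr_fun (In_measurableSet n)
          (fun s hs => enorm_G_of_mem hp' hs)
    _ = ∑' n, ENNReal.ofReal (len n)⁻¹ *
          (ENNReal.ofReal (len n) * ∫⁻ t in Set.Ioo 0 1, (‖f t n‖₊ : ℝ≥0∞) ^ p.toReal) := by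
        refine tsum_congr fun n => ?_
        rw [lintegral_const_mul _ (show Measurable fun s : ℝ => (‖f (psi n s) n‖₊ : ℝ≥0∞) ^ p.toReal
            from (hcoordmeas n).comp (measurable_psi n)),
          lintegral_In n _ (hcoordmeas n)]
    _ = ∑' n, ∫⁻ t in Set.Ioo 0 1, (‖f t n‖₊ : ℝ≥0∞) ^ p.toReal := by
        refine tsum_congr fun n => ?_
        rw [← mul_assoc, ← ENNReal.ofReal_mul (inv_pos.2 (len_pos n)).le,
          inv_mul_cancel₀ (len_pos n).ne', ENNReal.ofReal_one, one_mul]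
    _ = ∫⁻ t in Set.Ioo 0 1, ∑' n, (‖f t n‖₊ : ℝ≥0∞) ^ p.toReal :=
        (lintegral_tsum fun n => (hcoordmeas n).aemeasurable).symm
    _ = ∫⁻ t in Set.Ioo 0 1, (‖f t‖₊ : ℝ≥0∞) ^ p.toReal := by
        refine lintegral_congr fun t => nnnorm_coord_tsum hr (f t)

lemma eLpNorm_G [Fact (1 ≤ p)] (hp' : p ≠ ∞) {f : ℝ → lp (fun _ : ℕ => ℝ) p}
    (hf : StronglyMeasurable f) :
    eLpNorm (G p f) p (volume.restrict (Set.Ioo 0 1))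
      = eLpNorm f p (volume.restrict (Set.Ioo 0 1)) := by
  have hp0 : p ≠ 0 := (lt_of_lt_of_le zero_lt_one (Fact.out : 1 ≤ p)).ne'
  rw [eLpNorm_eq_lintegral_rpow_enorm_toReal hp0 hp', eLpNorm_eq_lintegral_rpow_enorm_toReal hp0 hp']
  simp only [enorm_eq_nnnorm]
  rw [G_lintegral hp' hf]

end

end Stmt15Aux

set_option synthInstance.maxHeartbeats 1000000 in
set_option maxHeartbeats 1000000 in
/-- For `1 ≤ p < ∞` and a closed subspace `E` of `ℓᵖ`, the Bochner space `Lᵖ((0,1); E)`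
embeds into `Lᵖ(0,1)` by a linear isometry, i.e. it is isometrically isomorphic to a
closed subspace of `Lᵖ(0,1)`. -/
theorem stmt_15 (p : ℝ≥0∞) [Fact (1 ≤ p)] (hp' : p ≠ ∞)
    (E : Submodule ℝ (lp (fun _ : ℕ => ℝ) p))
    (hE : IsClosed (E : Set (lp (fun _ : ℕ => ℝ) p))) :
    Nonempty ((Lp E p ((volume : Measure ℝ).restrict (Set.Ioo 0 1))) →ₗᵢ[ℝ]
      (Lp ℝ p ((volume : Measure ℝ).restrict (Set.Ioo 0 1)))) := by
  classical
  open Stmt15Aux in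
  refine ⟨?_⟩
  have hp0 : p ≠ 0 := (lt_of_lt_of_le zero_lt_one (Fact.out : 1 ≤ p)).ne'
  set μ := (volume : Measure ℝ).restrict (Set.Ioo 0 1) with hμ
  -- strongly measurable representative of the `ℓᵖ`-valued function
  have hFaesm : ∀ f : Lp E p μ,
      AEStronglyMeasurable (fun t => ((f : ℝ → E) t : lp (fun _ : ℕ => ℝ) p)) μ := fun f =>
    continuous_subtype_val.comp_aestronglyMeasurable (Lp.aestronglyMeasurable f)
  let F : Lp E p μ → (ℝ → lp (fun _ : ℕ => ℝ) p) := fun f => (hFaesm f).mk _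
  have hFsm : ∀ f, StronglyMeasurable (F f) := fun f => (hFaesm f).stronglyMeasurable_mk
  have hFae : ∀ f : Lp E p μ,
      (fun t => ((f : ℝ → E) t : lp (fun _ : ℕ => ℝ) p)) =ᵐ[μ] F f := fun f =>
    (hFaesm f).ae_eq_mk
  have heLp_coe : ∀ f : Lp E p μ,
      eLpNorm (fun t => ((f : ℝ → E) t : lp (fun _ : ℕ => ℝ) p)) p μ
        = eLpNorm (f : ℝ → E) p μ := by
    intro f
    rw [eLpNorm_eq_lintegral_rpow_enorm_toReal hp0 hp', eLpNorm_eq_lintegral_rpow_enorm_toReal hp0 hp']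
    rfl
  have heLp : ∀ f : Lp E p μ, eLpNorm (Stmt15Aux.G p (F f)) p μ = eLpNorm (f : ℝ → E) p μ := by
    intro f
    rw [Stmt15Aux.eLpNorm_G hp' (hFsm f), ← eLpNorm_congr_ae (hFae f), heLp_coe f]
  have hmem : ∀ f : Lp E p μ, MemLp (Stmt15Aux.G p (F f)) p μ := by
    intro f
    refine ⟨(Stmt15Aux.measurable_G (hFsm f)).aestronglyMeasurable, ?_⟩
    rw [heLp f]
    exact Lp.eLpNorm_lt_top f
  have hGae : ∀ f g : Lp E p μ, F f =ᵐ[μ] F g →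
      Stmt15Aux.G p (F f) =ᵐ[μ] Stmt15Aux.G p (F g) := fun f g h => Stmt15Aux.G_congr_ae h
  refine
    { toFun := fun f => (hmem f).toLp _
      map_add' := ?_
      map_smul' := ?_
      norm_map' := ?_ }
  · intro f g
    rw [← MemLp.toLp_add (hmem f) (hmem g)]
    apply MemLp.toLp_congr _ _ _
    have h1 : F (f + g) =ᵐ[μ] F f + F g := by
      refine (hFae (f + g)).symm.trans (.trans ?_ ((hFae f).add (hFae g)))
      filter_upwards [Lp.coeFn_add f g] with t ht
      simp only [Pi.add_apply, ht]
      push_cast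
      rfl
    exact (Stmt15Aux.G_congr_ae h1).trans
      (Filter.EventuallyEq.of_eq (funext fun s => Stmt15Aux.G_add (F f) (F g) s))
  · intro c f
    simp only [RingHom.id_apply]
    rw [← MemLp.toLp_const_smul c (hmem f)]
    apply MemLp.toLp_congr _ _ _
    have h1 : F (c • f) =ᵐ[μ] c • F f := by
      refine (hFae (c • f)).symm.trans (.trans ?_ ((hFae f).const_smul c))
      filter_upwards [Lp.coeFn_smul c f] with t ht
      simp only [Pi.smul_apply, ht]
      push_cast
      rfl
    refine (Stmt15Aux.G_congr_ae h1).trans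
      (Filter.EventuallyEq.of_eq (funext fun s => ?_))
    rw [Stmt15Aux.G_smul c (F f) s]
    rfl
  · intro f
    show ‖(hmem f).toLp _‖ = ‖f‖
    rw [Lp.norm_toLp, heLp f, Lp.norm_def]
end
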